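/- arXiv:2107.11271 — 6 statements merged into one kernel-verified Lean document; each statement's English description precedes it below -/
import Mathlib

section
/- Let (X,d) be a compact metric space, ε > 0, A an ε-approximation of X, and γ = sup{d(x,A) : x ∈ X}. Then for every 0 < ε' < (ε − γ)/2 and every ε'-approximation A' of X, the map q : U_{4ε'}(A') → U_{4ε}(A) given by q(C) = ⋃_{x ∈ C} (B(x,ε) ∩ A) is well-defined: if diam(C) < 4ε' then diam(q(C)) < 4ε. -/
open Metric Set

/-- Well-definedness of the FASO bonding map `q(C) = ⋃_{x ∈ C} (B(x,ε) ∩ A)`: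
if `C` is a nonempty subset of the `ε'`-approximation `A'` with `diam C < 4ε'`, then `q C`
is a nonempty subset of `A` with `diam (q C) < 4ε`. -/
theorem stmt_3 {X : Type*} [MetricSpace X] [CompactSpace X]
    (ε : ℝ) (hε : 0 < ε) (A : Set X) (hAfin : A.Finite)
    (hApprox : ∀ x : X, ∃ a ∈ A, dist x a < ε)
    (γ : ℝ) (hγ : IsLUB (Set.range fun x : X => Metric.infDist x A) γ)
    (ε' : ℝ) (hε' : 0 < ε') (hε'2 : ε' < (ε - γ) / 2)
    (A' : Set X) (hA'fin : A'.Finite) (hApprox' : ∀ x : X, ∃ a ∈ A', dist x a < ε')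
    (C : Set X) (hCsub : C ⊆ A') (hCne : C.Nonempty) (hCdiam : Metric.diam C < 4 * ε') :
    (⋃ x ∈ C, Metric.ball x ε ∩ A).Nonempty ∧
      (⋃ x ∈ C, Metric.ball x ε ∩ A) ⊆ A ∧
      Metric.diam (⋃ x ∈ C, Metric.ball x ε ∩ A) < 4 * ε := by
  obtain ⟨x0, hx0⟩ := hCne
  -- γ ≥ 0
  have hγ0 : 0 ≤ γ := le_trans Metric.infDist_nonneg (hγ.1 ⟨x0, rfl⟩)
  have h2ε' : 2 * ε' < ε := by linarith
  have hCbdd : Bornology.IsBounded C := (hA'fin.subset hCsub).isBounded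
  refine ⟨?_, ?_, ?_⟩
  · obtain ⟨a, haA, ha⟩ := hApprox x0
    exact ⟨a, Set.mem_biUnion hx0 ⟨by simpa [Metric.mem_ball, dist_comm] using ha, haA⟩⟩
  · intro y hy
    simp only [Set.mem_iUnion] at hy
    obtain ⟨x, hx, hy⟩ := hy
    exact hy.2
  · have hle : Metric.diam (⋃ x ∈ C, Metric.ball x ε ∩ A) ≤ ε + Metric.diam C + ε := by
      apply Metric.diam_le_of_forall_dist_le (by positivity)
      intro y1 hy1 y2 hy2
      simp only [Set.mem_iUnion] at hy1 hy2
      obtain ⟨x1, hx1, hy1, _⟩ := hy1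
      obtain ⟨x2, hx2, hy2, _⟩ := hy2
      have h1 : dist y1 x1 < ε := by simpa [Metric.mem_ball] using hy1
      have h2 : dist y2 x2 < ε := by simpa [Metric.mem_ball] using hy2
      have h3 : dist x1 x2 ≤ Metric.diam C := Metric.dist_le_diam_of_mem hCbdd hx1 hx2
      calc dist y1 y2 ≤ dist y1 x1 + dist x1 x2 + dist x2 y2 := dist_triangle4 _ _ _ _
        _ ≤ ε + Metric.diam C + ε := by rw [dist_comm x2 y2]; linarith
    linarith
end

section
/- Let (X,d) be a compact metric space, ε > 0, and A an ε-approximation of X. Then the map q : X → U_{4ε}(A) given by q(x) = B(x,ε) ∩ A is well-defined (diam(q(x)) < 2ε ≤ 4ε and q(x) is nonempty) and continuous, where U_{4ε}(A) carries the Alexandroff topology for the reverse-inclusion order. -/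
open Metric Set

/-- The map `q : X → U_{4ε}(A)`, `q(x) = B(x,ε) ∩ A`, is well-defined
(`q x` is nonempty and `diam (q x) < 2ε ≤ 4ε`) and continuous for the Alexandroff
topology of the reverse-inclusion order: for each `x` there is `δ > 0` such that
`q x ⊆ q y` whenever `d(x,y) < δ`. -/
theorem stmt_5 {X : Type*} [MetricSpace X] [CompactSpace X]
    (ε : ℝ) (hε : 0 < ε) (A : Set X) (hAfin : A.Finite)
    (hApprox : ∀ x : X, ∃ a ∈ A, dist x a < ε) :
    (∀ x : X, (Metric.ball x ε ∩ A).Nonempty ∧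
        Metric.diam (Metric.ball x ε ∩ A) < 2 * ε ∧ 2 * ε ≤ 4 * ε) ∧
      ∀ x : X, ∃ δ > 0, ∀ y : X, dist x y < δ →
        Metric.ball x ε ∩ A ⊆ Metric.ball y ε ∩ A := by
  have key : ∀ x : X, ∃ ε' : ℝ, 0 ≤ ε' ∧ ε' < ε ∧
      ∀ a ∈ Metric.ball x ε ∩ A, dist a x ≤ ε' := by
    intro x
    have hSfin : (Metric.ball x ε ∩ A).Finite := hAfin.subset inter_subset_right
    obtain ⟨a, haA, ha⟩ := hApprox x
    have haS : a ∈ Metric.ball x ε ∩ A :=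
      ⟨by simpa [Metric.mem_ball, dist_comm] using ha, haA⟩
    have hne : hSfin.toFinset.Nonempty := ⟨a, hSfin.mem_toFinset.mpr haS⟩
    refine ⟨hSfin.toFinset.sup' hne (fun b => dist b x), ?_, ?_, ?_⟩
    · obtain ⟨b, hb⟩ := hne
      exact le_trans dist_nonneg (Finset.le_sup' (fun b => dist b x) hb)
    · obtain ⟨b, hb, hbeq⟩ := hSfin.toFinset.exists_mem_eq_sup' hne (fun b => dist b x)
      rw [hbeq]
      exact Metric.mem_ball.mp (hSfin.mem_toFinset.mp hb).1
    · intro b hb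
      exact Finset.le_sup' (fun b => dist b x) (hSfin.mem_toFinset.mpr hb)
  constructor
  · intro x
    obtain ⟨ε', hε'0, hε'ε, hbound⟩ := key x
    obtain ⟨a, haA, ha⟩ := hApprox x
    refine ⟨⟨a, by simpa [Metric.mem_ball, dist_comm] using ha, haA⟩, ?_, by linarith⟩
    have hdiam := Metric.diam_le_of_forall_dist_le (by linarith : (0:ℝ) ≤ 2*ε')
      (fun b hb c hc => by
        have h1 := hbound b hb
        have h2 := hbound c hc
        have h3 := dist_triangle b x c
        rw [dist_comm x c] at h3
        linarith)
    linarith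
  · intro x
    obtain ⟨ε', hε'0, hε'ε, hbound⟩ := key x
    refine ⟨ε - ε', by linarith, fun y hxy b hb => ⟨?_, hb.2⟩⟩
    have h1 := hbound b hb
    have h2 := dist_triangle b x y
    rw [Metric.mem_ball]
    linarith
end

section
/- Let (U_n, q_{n,n+1}) be a FASO for a compact metric space X with parameters ε_{n+1} < (ε_n − γ_n)/2 where γ_n = sup_x d(x,A_n). For x ∈ X and m > n, every point a_n ∈ q_{n,m}(A_m(x)) satisfies d(a_n, x) < 2ε_n; in particular X_*^n := ⋃_{m>n} q_{n,m}(A_m(x)) is contained in B(x, 2ε_n) ∩ A_n and hence has diameter < 4ε_n, so X_*^n ∈ U_{4ε_n}(A_n). -/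
open Metric Set Filter

/-- The FASO bonding map at one level: `q(C) = ⋃_{c ∈ C} B(c,ε) ∩ A`. -/
def qmap {X : Type*} [MetricSpace X] (ε : ℝ) (A : Set X) (C : Set X) : Set X :=
  ⋃ c ∈ C, Metric.ball c ε ∩ A

/-- Iterated bonding maps: `qdown ε A n k` is `q_{n, n+k}`, mapping subsets at level `n+k`
down to subsets at level `n`. -/
def qdown {X : Type*} [MetricSpace X] (ε : ℕ → ℝ) (A : ℕ → Set X) (n : ℕ) :
    ℕ → Set X → Set X
  | 0, C => C
  | k + 1, C => qdown ε A n k (qmap (ε (n + k)) (A (n + k)) C)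

/-- `A_m(x)`: the set of nearest points of `A` to `x`. -/
def nearestPts {X : Type*} [MetricSpace X] (x : X) (A : Set X) : Set X :=
  {a ∈ A | dist x a = Metric.infDist x A}

/-- `X_*^n = ⋃_{m > n} q_{n,m}(A_m(x))`. -/
def Xstar {X : Type*} [MetricSpace X] (ε : ℕ → ℝ) (A : ℕ → Set X) (x : X) (n : ℕ) :
    Set X :=
  ⋃ m, ⋃ (_ : n < m), qdown ε A n (m - n) (nearestPts x (A m))

lemma mem_qmap {X : Type*} [MetricSpace X] {ε : ℝ} {A C : Set X} {a : X} :
    a ∈ qmap ε A C ↔ ∃ c ∈ C, dist a c < ε ∧ a ∈ A := by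
  simp only [qmap, mem_iUnion, Metric.mem_ball, Set.mem_inter_iff]
  tauto

lemma qdown_subset {X : Type*} [MetricSpace X] (ε : ℕ → ℝ) (A : ℕ → Set X) (n : ℕ) :
    ∀ (k : ℕ) (C : Set X), qdown ε A n (k + 1) C ⊆ A n := by
  intro k
  induction k with
  | zero =>
    intro C a ha
    rw [show qdown ε A n 1 C = qmap (ε (n+0)) (A (n+0)) C from rfl, mem_qmap] at ha
    obtain ⟨c, _, _, h⟩ := ha
    simpa using h
  | succ k ih =>
    intro C
    exact ih _

lemma qdown_nonempty {X : Type*} [MetricSpace X] (ε : ℕ → ℝ) (A : ℕ → Set X)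
    (hApprox : ∀ n, ∀ x : X, ∃ a ∈ A n, dist x a < ε n) (n : ℕ) :
    ∀ (k : ℕ) (C : Set X), C.Nonempty → (qdown ε A n k C).Nonempty := by
  intro k
  induction k with
  | zero => intro C hC; exact hC
  | succ k ih =>
    intro C ⟨c, hc⟩
    apply ih
    obtain ⟨a, haA, had⟩ := hApprox (n + k) c
    exact ⟨a, mem_qmap.2 ⟨c, hc, by rwa [dist_comm] at had, haA⟩⟩

lemma qdown_dist {X : Type*} [MetricSpace X] (ε : ℕ → ℝ) (A : ℕ → Set X) (x : X) (n : ℕ) :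
    ∀ (k : ℕ) (C : Set X) (r : ℝ), (∀ c ∈ C, dist c x < r) →
      ∀ a ∈ qdown ε A n k C, dist a x < r + ∑ t ∈ Finset.range k, ε (n + t) := by
  intro k
  induction k with
  | zero => intro C r h a ha; simpa using h a ha
  | succ k ih =>
    intro C r h a ha
    have key := ih (qmap (ε (n + k)) (A (n + k)) C) (r + ε (n + k)) ?_ a ha
    · rw [Finset.sum_range_succ]; linarith
    · intro c hc
      rw [mem_qmap] at hc
      obtain ⟨c', hc', hd, _⟩ := hc
      have := h c' hc'
      have := dist_triangle c c' x
      linarith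

lemma sum_bound {ε : ℕ → ℝ} (h2 : ∀ t, 2 * ε (t + 1) ≤ ε t) (n : ℕ) :
    ∀ k, 2 * ε (n + k) + ∑ t ∈ Finset.range k, ε (n + t) ≤ 2 * ε n := by
  intro k
  induction k with
  | zero => simp
  | succ k ih =>
    rw [Finset.sum_range_succ]
    have h := h2 (n + k)
    have : n + (k + 1) = (n + k) + 1 := by omega
    rw [this]
    linarith

/-- In a FASO, for `m > n` every point of `q_{n,m}(A_m(x))` lies within `2ε_n` of `x`;
hence `X_*^n ⊆ B(x,2ε_n) ∩ A_n`, so `X_*^n` is nonempty with diameter `< 4ε_n`,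
i.e. `X_*^n ∈ U_{4ε_n}(A_n)`. -/
theorem stmt_7 {X : Type*} [MetricSpace X] [CompactSpace X] [Nonempty X]
    (ε : ℕ → ℝ) (A : ℕ → Set X) (γ : ℕ → ℝ)
    (hεpos : ∀ n, 0 < ε n)
    (hεlim : Tendsto ε atTop (nhds 0))
    (hAfin : ∀ n, (A n).Finite)
    (hApprox : ∀ n, ∀ x : X, ∃ a ∈ A n, dist x a < ε n)
    (hγ : ∀ n, IsLUB (Set.range fun x : X => Metric.infDist x (A n)) (γ n))
    (hrec : ∀ n, ε (n + 1) < (ε n - γ n) / 2)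
    (x : X) (n : ℕ) :
    (∀ m, n < m → ∀ a ∈ qdown ε A n (m - n) (nearestPts x (A m)), dist a x < 2 * ε n) ∧
      Xstar ε A x n ⊆ Metric.ball x (2 * ε n) ∩ A n ∧
      (Xstar ε A x n).Nonempty ∧
      Metric.diam (Xstar ε A x n) < 4 * ε n := by
  -- γ is nonnegative
  have hγ0 : ∀ t, 0 ≤ γ t := by
    intro t
    obtain ⟨x0⟩ := ‹Nonempty X›
    exact le_trans Metric.infDist_nonneg ((hγ t).1 ⟨x0, rfl⟩)
  have h2 : ∀ t, 2 * ε (t + 1) ≤ ε t := by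
    intro t
    have := hrec t
    have := hγ0 t
    linarith
  -- nearest points lie within ε m of x
  have hnear : ∀ m, ∀ c ∈ nearestPts x (A m), dist c x < ε m := by
    intro m c hc
    obtain ⟨a, haA, had⟩ := hApprox m x
    have h1 : Metric.infDist x (A m) ≤ dist x a := Metric.infDist_le_dist_of_mem haA
    have h2 : dist x c = Metric.infDist x (A m) := hc.2
    rw [dist_comm]
    linarith
  have key : ∀ m, n < m → ∀ a ∈ qdown ε A n (m - n) (nearestPts x (A m)),
      dist a x < 2 * ε n := by
    intro m hm a ha
    set k := m - n with hk
    have hmk : m = n + k := by omega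
    have hb := qdown_dist ε A x n k (nearestPts x (A m)) (ε m) (hnear m) a ha
    have hs := sum_bound h2 n k
    have hεm : 0 < ε (n + k) := hεpos (n + k)
    rw [hmk] at hb
    linarith [hb, hs, hεm]
  have hsub : Xstar ε A x n ⊆ Metric.ball x (2 * ε n) ∩ A n := by
    intro a ha
    simp only [Xstar, mem_iUnion] at ha
    obtain ⟨m, hm, ha⟩ := ha
    refine ⟨Metric.mem_ball.2 (key m hm a ha), ?_⟩
    have : m - n = (m - n - 1) + 1 := by omega
    rw [this] at ha
    exact qdown_subset ε A n _ _ ha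
  have hne : (Xstar ε A x n).Nonempty := by
    have hAne : (nearestPts x (A (n + 1))).Nonempty := by
      obtain ⟨a, haA, _⟩ := hApprox (n + 1) x
      obtain ⟨y, hy, hyd⟩ := ((hAfin (n + 1)).isCompact).exists_infDist_eq_dist ⟨a, haA⟩ x
      exact ⟨y, hy, hyd.symm⟩
    obtain ⟨a, ha⟩ := qdown_nonempty ε A hApprox n ((n + 1) - n) _ hAne
    exact ⟨a, mem_iUnion.2 ⟨n + 1, mem_iUnion.2 ⟨Nat.lt_succ_self n, ha⟩⟩⟩
  refine ⟨key, hsub, hne, ?_⟩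
  have hfin : (Xstar ε A x n).Finite :=
    (hAfin n).subset (fun a ha => (hsub ha).2)
  have hne' : (hfin.toFinset ×ˢ hfin.toFinset).Nonempty := by
    obtain ⟨a, ha⟩ := hne
    exact ⟨(a, a), Finset.mem_product.2 ⟨hfin.mem_toFinset.2 ha, hfin.mem_toFinset.2 ha⟩⟩
  obtain ⟨p, hp, hmax⟩ := (hfin.toFinset ×ˢ hfin.toFinset).exists_max_image
    (fun q => dist q.1 q.2) hne'
  obtain ⟨hp1, hp2⟩ := Finset.mem_product.1 hp
  have ha' := Metric.mem_ball.1 (hsub (hfin.mem_toFinset.1 hp1)).1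
  have hb' := Metric.mem_ball.1 (hsub (hfin.mem_toFinset.1 hp2)).1
  have hdiam : Metric.diam (Xstar ε A x n) ≤ dist p.1 p.2 := by
    apply Metric.diam_le_of_forall_dist_le dist_nonneg
    intro a haX b hbX
    exact hmax (a, b) (Finset.mem_product.2
      ⟨hfin.mem_toFinset.2 haX, hfin.mem_toFinset.2 hbX⟩)
  have ht := dist_triangle p.1 x p.2
  rw [dist_comm x p.2] at ht
  linarith
end

section
/- With FASO notation, for every x ∈ X the sequence (X_*^n)_{n∈ℕ} is an element of the inverse limit of (U_{4ε_n}(A_n), q_{n,n+1}), i.e., q_{n,n+1}(X_*^{n+1}) = X_*^n for every n. -/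
open Metric Set Filter

lemma qmap_mono {X : Type*} [MetricSpace X] (ε : ℝ) (A : Set X) {C D : Set X}
    (h : C ⊆ D) : qmap ε A C ⊆ qmap ε A D := by
  intro a ha
  simp only [qmap, mem_iUnion] at ha ⊢
  obtain ⟨c, hc, h2⟩ := ha
  exact ⟨c, h hc, h2⟩

lemma qdown_mono {X : Type*} [MetricSpace X] (ε : ℕ → ℝ) (A : ℕ → Set X) (n k : ℕ)
    {C D : Set X} (h : C ⊆ D) : qdown ε A n k C ⊆ qdown ε A n k D := by
  induction k generalizing C D with
  | zero => exact h
  | succ k ih => exact ih (qmap_mono _ _ h)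

lemma qmap_iUnion {X : Type*} [MetricSpace X] (ε : ℝ) (A : Set X) {ι : Sort*}
    (s : ι → Set X) : qmap ε A (⋃ i, s i) = ⋃ i, qmap ε A (s i) := by
  ext a
  simp only [qmap, mem_iUnion, mem_inter_iff]
  aesop

lemma qdown_peel {X : Type*} [MetricSpace X] (ε : ℕ → ℝ) (A : ℕ → Set X) (n k : ℕ)
    (C : Set X) :
    qdown ε A n (k + 1) C = qmap (ε n) (A n) (qdown ε A (n + 1) k C) := by
  induction k generalizing C with
  | zero => rfl
  | succ k ih =>
      have h : n + (k + 1) = n + 1 + k := by omega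
      show qdown ε A n (k + 1) (qmap (ε (n + (k + 1))) (A (n + (k + 1))) C) = _
      rw [ih, h]
      rfl

/-- In a FASO, the sequence `(X_*^n)` is a thread of the inverse sequence:
`q_{n,n+1}(X_*^{n+1}) = X_*^n` for every `n`. -/
theorem stmt_11 {X : Type*} [MetricSpace X] [CompactSpace X] [Nonempty X]
    (ε : ℕ → ℝ) (A : ℕ → Set X) (γ : ℕ → ℝ)
    (hεpos : ∀ n, 0 < ε n)
    (hεlim : Filter.Tendsto ε Filter.atTop (nhds 0))
    (hAfin : ∀ n, (A n).Finite)
    (hApprox : ∀ n, ∀ x : X, ∃ a ∈ A n, dist x a < ε n)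
    (hγ : ∀ n, IsLUB (Set.range fun x : X => Metric.infDist x (A n)) (γ n))
    (hrec : ∀ n, ε (n + 1) < (ε n - γ n) / 2)
    (x : X) (n : ℕ) :
    qmap (ε n) (A n) (Xstar ε A x (n + 1)) = Xstar ε A x n := by
  -- infDist is bounded by γ, and γ (m+1) ≤ ε (m+1)
  have hinf_le : ∀ m (y : X), infDist y (A m) ≤ γ m := fun m y =>
    (hγ m).1 (mem_range_self y)
  have hγle : ∀ m, γ (m + 1) ≤ ε (m + 1) := by
    intro m
    refine (hγ (m + 1)).2 ?_
    rintro _ ⟨y, rfl⟩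
    obtain ⟨a, ha, hd⟩ := hApprox (m + 1) y
    exact le_of_lt (lt_of_le_of_lt (infDist_le_dist_of_mem ha) hd)
  -- the key step: nearest points at level m are in the image of nearest points at level m+1
  have hstep : ∀ m, nearestPts x (A m) ⊆
      qmap (ε m) (A m) (nearestPts x (A (m + 1))) := by
    intro m a ha
    obtain ⟨haA, hda⟩ := ha
    have hne : (A (m + 1)).Nonempty := by
      obtain ⟨b, hb, _⟩ := hApprox (m + 1) x; exact ⟨b, hb⟩
    obtain ⟨b, hbA, hbd⟩ := (hAfin (m + 1)).isCompact.exists_infDist_eq_dist hne x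
    have hb' : b ∈ nearestPts x (A (m + 1)) := ⟨hbA, hbd.symm⟩
    have h1 : dist x a ≤ γ m := hda ▸ hinf_le m x
    have h2 : dist x b ≤ ε (m + 1) := by
      rw [← hbd]; exact le_trans (hinf_le (m + 1) x) (hγle m)
    have hab : dist a b < ε m := by
      have := hrec m
      have hpos := hεpos (m + 1)
      calc dist a b ≤ dist a x + dist x b := dist_triangle a x b
        _ = dist x a + dist x b := by rw [dist_comm a x]
        _ < ε m := by linarith
    simp only [qmap, mem_iUnion]
    exact ⟨b, hb', by simpa [mem_ball, dist_comm] using hab, haA⟩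
  -- terms of the union are monotone in m
  have hterm : ∀ m, n < m →
      qdown ε A n (m - n) (nearestPts x (A m)) ⊆
      qdown ε A n (m + 1 - n) (nearestPts x (A (m + 1))) := by
    intro m hm
    have hk : m + 1 - n = (m - n) + 1 := by omega
    rw [hk]
    show _ ⊆ qdown ε A n (m - n) (qmap (ε (n + (m - n))) (A (n + (m - n))) _)
    have hnm : n + (m - n) = m := by omega
    rw [hnm]
    exact qdown_mono ε A n (m - n) (hstep m)
  -- compute the left-hand side
  have hLHS : qmap (ε n) (A n) (Xstar ε A x (n + 1)) =
      ⋃ m, ⋃ (_ : n + 1 < m), qdown ε A n (m - n) (nearestPts x (A m)) := by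
    rw [Xstar, qmap_iUnion]
    refine iUnion_congr fun m => ?_
    rw [qmap_iUnion]
    refine iUnion_congr fun hm => ?_
    have hk : m - n = (m - (n + 1)) + 1 := by omega
    rw [hk, qdown_peel]
  rw [hLHS, Xstar]
  apply Subset.antisymm
  · refine iUnion_subset fun m => iUnion_subset fun hm => ?_
    exact subset_iUnion_of_subset m (subset_iUnion_of_subset (by omega) Subset.rfl)
  · refine iUnion_subset fun m => iUnion_subset fun hm => ?_
    refine subset_trans (hterm m hm) ?_
    exact subset_iUnion_of_subset (m + 1) (subset_iUnion_of_subset (by omega) Subset.rfl)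
end

section
/- Let (C_n)_{n∈ℕ} be an element of the inverse limit of a FASO (U_{4ε_n}(A_n), q_{n,n+1}) for a compact metric space X. Then for all m ≥ n, the Hausdorff distance satisfies d_H(C_n, C_m) < 2ε_n − γ_n/2; consequently (C_n) is a Cauchy sequence in the hyperspace (2^X, d_H) which converges to a singleton {x} for some x ∈ X, and moreover d_H({x}, C_n) < 2ε_n for every n. -/
open Metric Set Filter

/-- For an element `(C_n)` of the inverse limit of a FASO: for `m ≥ n` one has
`d_H(C_n, C_m) < 2ε_n − γ_n/2`; hence `(C_n)` converges in the Hausdorff metric to a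
singleton `{x}` with `d_H({x}, C_n) < 2ε_n` for every `n`. -/
theorem stmt_12 {X : Type*} [MetricSpace X] [CompactSpace X] [Nonempty X]
    (ε : ℕ → ℝ) (A : ℕ → Set X) (γ : ℕ → ℝ)
    (hεpos : ∀ n, 0 < ε n)
    (hεlim : Filter.Tendsto ε Filter.atTop (nhds 0))
    (hAfin : ∀ n, (A n).Finite)
    (hApprox : ∀ n, ∀ x : X, ∃ a ∈ A n, dist x a < ε n)
    (hγ : ∀ n, IsLUB (Set.range fun x : X => Metric.infDist x (A n)) (γ n))
    (hrec : ∀ n, ε (n + 1) < (ε n - γ n) / 2)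
    (C : ℕ → Set X)
    (hCsub : ∀ n, C n ⊆ A n) (hCne : ∀ n, (C n).Nonempty)
    (hCdiam : ∀ n, Metric.diam (C n) < 4 * ε n)
    (hthread : ∀ n, qmap (ε n) (A n) (C (n + 1)) = C n) :
    (∀ n m, n ≤ m → Metric.hausdorffDist (C n) (C m) < 2 * ε n - γ n / 2) ∧
      ∃ x : X,
        Filter.Tendsto (fun n => Metric.hausdorffDist (C n) {x}) Filter.atTop (nhds 0) ∧
        ∀ n, Metric.hausdorffDist ({x} : Set X) (C n) < 2 * ε n := by
  have hγ0 : ∀ n, 0 ≤ γ n := fun n =>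
    le_trans infDist_nonneg ((hγ n).1 ⟨Classical.arbitrary X, rfl⟩)
  have hγε : ∀ n, γ n ≤ ε n := fun n => (hγ n).2 (by
    rintro y ⟨z, rfl⟩
    obtain ⟨a, ha, hd⟩ := hApprox n z
    exact le_of_lt (lt_of_le_of_lt (infDist_le_dist_of_mem ha) hd))
  have hεstep : ∀ n, ε (n + 1) < ε n := fun n => by
    have := hrec n; have := hγ0 n; have := hεpos n; linarith
  have hεanti : Antitone ε := antitone_nat_of_succ_le fun n => (hεstep n).le
  have hb : ∀ n, Bornology.IsBounded (C n) := fun n =>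
    ((hAfin n).subset (hCsub n)).isBounded
  have hne : ∀ n m, EMetric.hausdorffEdist (C n) (C m) ≠ ⊤ := fun n m =>
    hausdorffEdist_ne_top_of_nonempty_of_bounded (hCne n) (hCne m) (hb n) (hb m)
  have hstep : ∀ n, hausdorffDist (C n) (C (n + 1)) ≤ ε n := by
    intro n
    apply hausdorffDist_le_of_infDist (hεpos n).le
    · intro y hy
      rw [← hthread n] at hy
      simp only [qmap, mem_iUnion, mem_inter_iff, mem_ball] at hy
      obtain ⟨cc, hcc, hyc, _⟩ := hy
      exact le_of_lt (lt_of_le_of_lt (infDist_le_dist_of_mem hcc) hyc)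
    · intro cc hcc
      obtain ⟨a, ha, hd⟩ := hApprox n cc
      have haC : a ∈ C n := by
        rw [← hthread n]
        simp only [qmap, mem_iUnion, mem_inter_iff, mem_ball]
        exact ⟨cc, hcc, by rwa [dist_comm], ha⟩
      exact le_of_lt (lt_of_le_of_lt (infDist_le_dist_of_mem haC) hd)
  have hsum : ∀ k n, ∑ j ∈ Finset.range k, ε (n + j) < 2 * ε n := by
    intro k
    induction k with
    | zero => intro n; simpa using by have := hεpos n; linarith
    | succ k ih =>
      intro n
      rw [Finset.sum_range_succ']
      have heq : ∑ j ∈ Finset.range k, ε (n + (j + 1)) =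
          ∑ j ∈ Finset.range k, ε (n + 1 + j) :=
        Finset.sum_congr rfl fun j _ => by rw [show n + (j + 1) = n + 1 + j by omega]
      rw [heq]
      have h1 := ih (n + 1)
      have h2 := hrec n
      have h3 := hγ0 n
      simp only [Nat.add_zero]
      linarith
  have hchain : ∀ n k, hausdorffDist (C n) (C (n + k)) ≤ ∑ j ∈ Finset.range k, ε (n + j) := by
    intro n k
    induction k with
    | zero => simp [hausdorffDist_self_zero]
    | succ k ih =>
      calc hausdorffDist (C n) (C (n + (k + 1)))
          ≤ hausdorffDist (C n) (C (n + k)) + hausdorffDist (C (n + k)) (C (n + k + 1)) :=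
            hausdorffDist_triangle (hne _ _)
        _ ≤ (∑ j ∈ Finset.range k, ε (n + j)) + ε (n + k) := add_le_add ih (hstep (n + k))
        _ = ∑ j ∈ Finset.range (k + 1), ε (n + j) := (Finset.sum_range_succ _ _).symm
  have main1 : ∀ n m, n ≤ m → hausdorffDist (C n) (C m) < 2 * ε n - γ n / 2 := by
    intro n m hnm
    rcases eq_or_lt_of_le hnm with rfl | h
    · rw [hausdorffDist_self_zero]
      have := hγε n; have := hεpos n; linarith
    · obtain ⟨k, rfl⟩ : ∃ k, m = n + (k + 1) := ⟨m - n - 1, by omega⟩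
      have h1 := hchain n (k + 1)
      have heq : ∑ j ∈ Finset.range (k + 1), ε (n + j) =
          (∑ j ∈ Finset.range k, ε (n + 1 + j)) + ε n := by
        rw [Finset.sum_range_succ']
        congr 1
        exact Finset.sum_congr rfl fun j _ => by rw [show n + (j + 1) = n + 1 + j by omega]
      rw [heq] at h1
      have h2 := hsum k (n + 1)
      have h3 := hrec n
      have h4 := hγ0 n
      linarith
  choose c hc using hCne
  have hdd : ∀ n m, n ≤ m → ∀ y ∈ C n, dist y (c m) ≤ 2 * ε n + 4 * ε m := by
    intro n m hnm y hy
    have hcomp : IsCompact (C m) := ((hAfin m).subset (hCsub m)).isCompact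
    obtain ⟨z, hz, hz2⟩ := hcomp.exists_infDist_eq_dist ⟨c m, hc m⟩ y
    have h1 : infDist y (C m) ≤ hausdorffDist (C n) (C m) :=
      infDist_le_hausdorffDist_of_mem hy (hne n m)
    have h2 : dist z (c m) ≤ diam (C m) := dist_le_diam_of_mem (hb m) hz (hc m)
    have h3 := main1 n m hnm
    have h4 := hγ0 n
    have h5 := hCdiam m
    calc dist y (c m) ≤ dist y z + dist z (c m) := dist_triangle _ _ _
      _ ≤ 2 * ε n + 4 * ε m := by rw [← hz2]; linarith
  have hcauchy : CauchySeq c := by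
    apply cauchySeq_of_le_tendsto_0 (fun N => 6 * ε N)
    · intro n m N hn hm
      rcases le_total n m with h | h
      · have h1 := hdd n m h (c n) (hc n)
        have h2 : ε m ≤ ε n := hεanti h
        have h3 : ε n ≤ ε N := hεanti hn
        linarith
      · have h1 := hdd m n h (c m) (hc m)
        have h2 : ε n ≤ ε m := hεanti h
        have h3 : ε m ≤ ε N := hεanti hm
        rw [dist_comm]
        linarith
    · simpa using hεlim.const_mul (6 : ℝ)
  obtain ⟨x, hx⟩ := cauchySeq_tendsto_of_complete hcauchy
  have hDn : ∀ n, ∀ y ∈ C n, dist y x ≤ 2 * ε n := by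
    intro n y hy
    have hf : Tendsto (fun m => dist y (c m)) atTop (nhds (dist y x)) :=
      tendsto_const_nhds.dist hx
    have hg : Tendsto (fun m => 2 * ε n + 4 * ε m) atTop (nhds (2 * ε n)) := by
      have := tendsto_const_nhds (x := 2 * ε n) (f := atTop (α := ℕ)) |>.add
        (hεlim.const_mul (4 : ℝ))
      simpa using this
    refine le_of_tendsto_of_tendsto hf hg ?_
    filter_upwards [eventually_ge_atTop n] with m hm
    exact hdd n m hm y hy
  have hne2 : ∀ n, EMetric.hausdorffEdist ({x} : Set X) (C n) ≠ ⊤ := fun n =>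
    hausdorffEdist_ne_top_of_nonempty_of_bounded (singleton_nonempty x) ⟨c n, hc n⟩
      Bornology.isBounded_singleton (hb n)
  have hDle : ∀ n, hausdorffDist ({x} : Set X) (C n) ≤ 2 * ε n := by
    intro n
    apply hausdorffDist_le_of_infDist (by have := hεpos n; linarith)
    · intro z hz
      rw [mem_singleton_iff] at hz
      subst hz
      refine le_trans (infDist_le_dist_of_mem (hc n)) ?_
      rw [dist_comm]
      exact hDn n (c n) (hc n)
    · intro y hy
      exact le_trans (infDist_le_dist_of_mem (mem_singleton x)) (hDn n y hy)
  have hstrict : ∀ n, hausdorffDist ({x} : Set X) (C n) < 2 * ε n := by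
    intro n
    have h1 : hausdorffDist ({x} : Set X) (C n) ≤
        hausdorffDist ({x} : Set X) (C (n + 1)) + hausdorffDist (C (n + 1)) (C n) :=
      hausdorffDist_triangle (hne2 (n + 1))
    have h2 : hausdorffDist (C (n + 1)) (C n) ≤ ε n := by
      rw [hausdorffDist_comm]; exact hstep n
    have h3 := hDle (n + 1)
    have h4 := hrec n
    have h5 := hγ0 n
    linarith
  have htend : Tendsto (fun n => hausdorffDist (C n) {x}) atTop (nhds 0) := by
    refine squeeze_zero (g := fun n => 2 * ε n) (fun n => hausdorffDist_nonneg)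
      (fun n => by rw [hausdorffDist_comm]; exact hDle n) ?_
    simpa using hεlim.const_mul (2 : ℝ)
  exact ⟨main1, x, htend, hstrict⟩
end

section
/- 𝒳_* is a strong deformation retract of 𝒳: the map H : 𝒳 × [0,1] → 𝒳 defined by H((C_n), t) = (C_n) for t ∈ [0,1) and H((C_n), 1) = φ(φ̂((C_n))) (where φ̂ is the retraction onto the limit point) is continuous and realizes a homotopy from the identity to the retraction φ∘φ̂, fixing 𝒳_* throughout. -/
open Metric Set Filter

/-- The finite space `U_δ(A)`: nonempty subsets of `A` of diameter `< δ`. -/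
def Ufin {X : Type*} [MetricSpace X] (δ : ℝ) (A : Set X) : Type _ :=
  {C : Set X // C ⊆ A ∧ C.Nonempty ∧ Metric.diam C < δ}

/-- The Alexandroff topology of the reverse-inclusion order on `U_δ(A)`
(`C ≤ D` iff `D ⊆ C`): the open sets are the lower sets, i.e. the sets closed under
passing to supersets; the minimal open neighborhood of `C` is `{D : C ⊆ D}`. -/
instance UfinTop {X : Type*} [MetricSpace X] (δ : ℝ) (A : Set X) :
    TopologicalSpace (Ufin δ A) where
  IsOpen S := ∀ C ∈ S, ∀ D : Ufin δ A, C.1 ⊆ D.1 → D ∈ S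
  isOpen_univ := fun _ _ D _ => Set.mem_univ D
  isOpen_inter := fun s t hs ht C hC D hCD =>
    ⟨hs C hC.1 D hCD, ht C hC.2 D hCD⟩
  isOpen_sUnion := fun S hS C hC D hCD => by
    obtain ⟨s, hsS, hCs⟩ := hC
    exact ⟨s, hsS, hS s hsS C hCs D hCD⟩

/-- The inverse limit `𝒳` of the inverse sequence `(U_{4ε_n}(A_n), q_{n,n+1})`, as the
subspace of the product `Π n, U_{4ε_n}(A_n)` consisting of the threads. -/
def FasoLimit {X : Type*} [MetricSpace X] (ε : ℕ → ℝ) (A : ℕ → Set X) : Type _ :=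
  {f : (n : ℕ) → Ufin (4 * ε n) (A n) // ∀ n, qmap (ε n) (A n) (f (n + 1)).1 = (f n).1}

instance FasoLimitTop {X : Type*} [MetricSpace X] (ε : ℕ → ℝ) (A : ℕ → Set X) :
    TopologicalSpace (FasoLimit ε A) :=
  inferInstanceAs (TopologicalSpace
    {f : (n : ℕ) → Ufin (4 * ε n) (A n) //
      ∀ n, qmap (ε n) (A n) (f (n + 1)).1 = (f n).1})


namespace Stmt18
variable {X : Type*} [MetricSpace X]

lemma mem_qmap {ε : ℝ} {A C : Set X} {p : X} :
    p ∈ qmap ε A C ↔ ∃ c ∈ C, dist p c < ε ∧ p ∈ A := by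
  simp only [qmap, Set.mem_iUnion, Set.mem_inter_iff, Metric.mem_ball]
  tauto

lemma qmap_subset {ε : ℝ} {A C : Set X} : qmap ε A C ⊆ A := by
  intro p hp; exact (mem_qmap.1 hp).choose_spec.2.2

lemma qmap_mono {ε : ℝ} {A C D : Set X} (h : C ⊆ D) : qmap ε A C ⊆ qmap ε A D := by
  intro p hp
  obtain ⟨c, hc, h1, h2⟩ := mem_qmap.1 hp
  exact mem_qmap.2 ⟨c, h hc, h1, h2⟩

lemma qmap_nonempty {ε : ℝ} {A C : Set X} (h : ∀ x : X, ∃ a ∈ A, dist x a < ε)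
    (hC : C.Nonempty) : (qmap ε A C).Nonempty := by
  obtain ⟨c, hc⟩ := hC
  obtain ⟨a, ha, hd⟩ := h c
  exact ⟨a, mem_qmap.2 ⟨c, hc, by rw [dist_comm]; exact hd, ha⟩⟩

variable {ε : ℕ → ℝ} {A : ℕ → Set X}

lemma qdown_mono {n : ℕ} : ∀ (k : ℕ) {C D : Set X}, C ⊆ D →
    qdown ε A n k C ⊆ qdown ε A n k D
  | 0, _, _, h => h
  | k + 1, _, _, h => qdown_mono k (qmap_mono h)

lemma qdown_shift {n : ℕ} : ∀ (k : ℕ) (C : Set X),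
    qdown ε A n (k + 1) C = qmap (ε n) (A n) (qdown ε A (n + 1) k C)
  | 0, C => rfl
  | k + 1, C => by
    show qdown ε A n (k + 1) (qmap (ε (n + (k+1))) (A (n + (k+1))) C) = _
    rw [qdown_shift k]
    show _ = qmap (ε n) (A n) (qdown ε A (n+1) k (qmap (ε (n + 1 + k)) (A (n + 1 + k)) C))
    rw [show n + 1 + k = n + (k + 1) by omega]

lemma qdown_subset_A {n k : ℕ} {C : Set X} (hk : k ≠ 0) : qdown ε A n k C ⊆ A n := by
  obtain ⟨k, rfl⟩ := Nat.exists_eq_succ_of_ne_zero hk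
  rw [qdown_shift]; exact qmap_subset

lemma qdown_nonempty {n : ℕ} (hApprox : ∀ m, ∀ x : X, ∃ a ∈ A m, dist x a < ε m) :
    ∀ (k : ℕ) {C : Set X}, C.Nonempty → (qdown ε A n k C).Nonempty
  | 0, _, h => h
  | k + 1, _, h => qdown_nonempty hApprox k (qmap_nonempty (hApprox (n + k)) h)

lemma qdown_dist {n : ℕ} : ∀ (k : ℕ) {C : Set X} {p : X}, p ∈ qdown ε A n k C →
    ∃ c ∈ C, dist p c ≤ ∑ j ∈ Finset.range k, ε (n + j)
  | 0, C, p, hp => ⟨p, hp, by simp⟩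
  | k + 1, C, p, hp => by
    obtain ⟨q, hq, hpq⟩ := qdown_dist k hp
    obtain ⟨c, hc, hqc, -⟩ := mem_qmap.1 hq
    refine ⟨c, hc, ?_⟩
    rw [Finset.sum_range_succ]
    exact (dist_triangle p q c).trans (add_le_add hpq hqc.le)


section
variable {ε : ℕ → ℝ} {A : ℕ → Set X} {γ : ℕ → ℝ}

lemma sum_bound (h2e : ∀ j, 2 * ε (j + 1) ≤ ε j) (n : ℕ) :
    ∀ k, (∑ j ∈ Finset.range k, ε (n + j)) + 2 * ε (n + k) ≤ 2 * ε n
  | 0 => by simp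
  | k + 1 => by
    have h1 := h2e (n + k)
    have h2 := sum_bound h2e n k
    rw [Finset.sum_range_succ]
    have : n + (k + 1) = n + k + 1 := by omega
    rw [this]
    linarith

lemma geps (h2e : ∀ j, 2 * ε (j + 1) ≤ ε j) (n : ℕ) : ∀ k, ε (n + k) ≤ ε n / 2 ^ k
  | 0 => by simp
  | k + 1 => by
    have h1 := h2e (n + k)
    have h2 := geps h2e n k
    have : n + (k + 1) = n + k + 1 := by omega
    rw [this, pow_succ]
    rw [div_mul_eq_div_div]
    linarith

lemma nearest_nonempty {B : Set X} (hfin : B.Finite) (hne : B.Nonempty) (x : X) :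
    (nearestPts x B).Nonempty := by
  obtain ⟨y, hy, hd⟩ := hfin.isCompact.exists_infDist_eq_dist hne x
  exact ⟨y, hy, hd.symm⟩

/-- nearest points step: `N_m(x) ⊆ q_m(N_{m+1}(x'))` provided `dist x x'` is small. -/
lemma nearest_step {x x' : X} {m : ℕ}
    (hAfin : ∀ n, (A n).Finite) (hApprox : ∀ n, ∀ y : X, ∃ a ∈ A n, dist y a < ε n)
    (hγub : ∀ n y, infDist y (A n) ≤ γ n)
    (hd : dist x x' + γ m + γ (m + 1) < ε m) :
    nearestPts x (A m) ⊆ qmap (ε m) (A m) (nearestPts x' (A (m + 1))) := by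
  intro a ha
  obtain ⟨a0, ha0⟩ := hApprox (m + 1) x'
  obtain ⟨b, hb, hbd⟩ := nearest_nonempty (hAfin (m + 1)) ⟨a0, ha0.1⟩ x'
  refine mem_qmap.2 ⟨b, ⟨hb, hbd⟩, ?_, ha.1⟩
  have h1 : dist x a ≤ γ m := ha.2 ▸ hγub m x
  have h2 : dist x' b ≤ γ (m + 1) := hbd ▸ hγub (m + 1) x'
  calc dist a b ≤ dist a x + dist x x' + dist x' b := dist_triangle4 a x x' b
    _ ≤ γ m + dist x x' + γ (m + 1) := by rw [dist_comm a x]; linarith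
    _ < ε m := by linarith

/-- If `N_M(x₀) ⊆ q_M(N_{M+1}(x'))` then the `M`-term of `Xstar x₀ n` sits inside
`Xstar x' n`. -/
lemma qdown_nearest_subset_Xstar {x₀ x' : X} {n M : ℕ} (hM : n < M)
    (h : nearestPts x₀ (A M) ⊆ qmap (ε M) (A M) (nearestPts x' (A (M + 1)))) :
    qdown ε A n (M - n) (nearestPts x₀ (A M)) ⊆ Xstar ε A x' n := by
  intro p hp
  have h1 : qdown ε A n (M - n) (nearestPts x₀ (A M)) ⊆
      qdown ε A n (M - n) (qmap (ε M) (A M) (nearestPts x' (A (M + 1)))) := qdown_mono _ h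
  have h2 : qdown ε A n (M - n) (qmap (ε M) (A M) (nearestPts x' (A (M + 1)))) =
      qdown ε A n (M + 1 - n) (nearestPts x' (A (M + 1))) := by
    have e1 : M + 1 - n = (M - n) + 1 := by omega
    have e2 : n + (M - n) = M := by omega
    rw [e1]
    show _ = qdown ε A n (M - n) (qmap (ε (n + (M - n))) (A (n + (M - n))) _)
    rw [e2]
  exact Set.mem_iUnion.2 ⟨M + 1, Set.mem_iUnion.2 ⟨by omega, h2 ▸ h1 hp⟩⟩

/-- monotonicity of the terms of the union defining `Xstar`. -/
lemma Xstar_term_mono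
    (hAfin : ∀ n, (A n).Finite) (hApprox : ∀ n, ∀ y : X, ∃ a ∈ A n, dist y a < ε n)
    (hγub : ∀ n y, infDist y (A n) ≤ γ n)
    (hγ2 : ∀ n, γ n + γ (n + 1) < ε n)
    (x : X) {n m m' : ℕ} (hm : n < m) (hmm : m ≤ m') :
    qdown ε A n (m - n) (nearestPts x (A m)) ⊆
      qdown ε A n (m' - n) (nearestPts x (A m')) := by
  induction m', hmm using Nat.le_induction with
  | base => exact fun p hp => hp
  | succ m' hmm ih =>
    refine fun p hp => ?_
    have step : qdown ε A n (m' - n) (nearestPts x (A m')) ⊆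
        qdown ε A n (m' + 1 - n) (nearestPts x (A (m' + 1))) := by
      have hstep := nearest_step (x := x) (x' := x) (m := m') hAfin hApprox hγub
        (by simpa using hγ2 m')
      intro q hq
      have h1 := qdown_mono (ε := ε) (A := A) (n := n) (m' - n) hstep hq
      have h2 : qdown ε A n (m' - n) (qmap (ε m') (A m') (nearestPts x (A (m' + 1)))) =
          qdown ε A n (m' + 1 - n) (nearestPts x (A (m' + 1))) := by
        have e1 : m' + 1 - n = (m' - n) + 1 := by omega
        have e2 : n + (m' - n) = m' := by omega
        rw [e1]
        show _ = qdown ε A n (m' - n) (qmap (ε (n + (m' - n))) (A (n + (m' - n))) _)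
        rw [e2]
      exact h2 ▸ h1
    exact step (ih hp)

lemma Xstar_subset_A (x : X) (n : ℕ) : Xstar ε A x n ⊆ A n := by
  intro p hp
  obtain ⟨m, hm⟩ := Set.mem_iUnion.1 hp
  obtain ⟨hnm, hp⟩ := Set.mem_iUnion.1 hm
  exact qdown_subset_A (by omega) hp

lemma Xstar_nonempty
    (hAfin : ∀ n, (A n).Finite) (hApprox : ∀ n, ∀ y : X, ∃ a ∈ A n, dist y a < ε n)
    (x : X) (n : ℕ) : (Xstar ε A x n).Nonempty := by
  obtain ⟨a0, ha0⟩ := hApprox (n + 1) x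
  obtain ⟨p, hp⟩ := qdown_nonempty (n := n) hApprox (n + 1 - n)
    (nearest_nonempty (hAfin (n + 1)) ⟨a0, ha0.1⟩ x)
  exact ⟨p, Set.mem_iUnion.2 ⟨n + 1, Set.mem_iUnion.2 ⟨by omega, hp⟩⟩⟩

lemma Xstar_point_dist (hεpos : ∀ n, 0 < ε n) (h2e : ∀ j, 2 * ε (j + 1) ≤ ε j)
    (hγub : ∀ n y, infDist y (A n) ≤ γ n) (hγlt : ∀ n, γ n < ε n)
    {x p : X} {n : ℕ} (hp : p ∈ Xstar ε A x n) : dist p x < 2 * ε n := by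
  obtain ⟨m, hm⟩ := Set.mem_iUnion.1 hp
  obtain ⟨hnm, hp⟩ := Set.mem_iUnion.1 hm
  obtain ⟨a, ha, hpa⟩ := qdown_dist _ hp
  have h1 : dist x a ≤ γ m := ha.2 ▸ hγub m x
  have h2 : γ m < ε m := hγlt m
  have h3 := sum_bound h2e n (m - n)
  have e2 : n + (m - n) = m := by omega
  rw [e2] at h3
  have h4 : 0 < ε m := hεpos m
  calc dist p x ≤ dist p a + dist a x := dist_triangle p a x
    _ < (∑ j ∈ Finset.range (m - n), ε (n + j)) + ε m := by
        rw [dist_comm a x]; linarith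
    _ ≤ 2 * ε n := by linarith

lemma Xstar_diam (hεpos : ∀ n, 0 < ε n) (h2e : ∀ j, 2 * ε (j + 1) ≤ ε j)
    (hAfin : ∀ n, (A n).Finite) (hApprox : ∀ n, ∀ y : X, ∃ a ∈ A n, dist y a < ε n)
    (hγub : ∀ n y, infDist y (A n) ≤ γ n) (hγlt : ∀ n, γ n < ε n)
    (x : X) (n : ℕ) : Metric.diam (Xstar ε A x n) < 4 * ε n := by
  obtain ⟨b, hb, hmax⟩ := Set.exists_max_image (Xstar ε A x n) (fun p => dist p x)
    ((hAfin n).subset (Xstar_subset_A x n)) (Xstar_nonempty hAfin hApprox x n)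
  have hb2 : dist b x < 2 * ε n := Xstar_point_dist hεpos h2e hγub hγlt hb
  have : Metric.diam (Xstar ε A x n) ≤ 2 * dist b x := by
    refine Metric.diam_le_of_forall_dist_le (by positivity) fun p hp q hq => ?_
    calc dist p q ≤ dist p x + dist x q := dist_triangle p x q
      _ ≤ dist b x + dist b x := by
          rw [dist_comm x q]; exact add_le_add (hmax p hp) (hmax q hq)
      _ = 2 * dist b x := by ring
  linarith

lemma Xstar_thread
    (hAfin : ∀ n, (A n).Finite) (hApprox : ∀ n, ∀ y : X, ∃ a ∈ A n, dist y a < ε n)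
    (hγub : ∀ n y, infDist y (A n) ≤ γ n)
    (hγ2 : ∀ n, γ n + γ (n + 1) < ε n)
    (x : X) (n : ℕ) :
    qmap (ε n) (A n) (Xstar ε A x (n + 1)) = Xstar ε A x n := by
  apply Set.Subset.antisymm
  · intro p hp
    obtain ⟨c, hc, h1, h2⟩ := mem_qmap.1 hp
    obtain ⟨m, hm⟩ := Set.mem_iUnion.1 hc
    obtain ⟨hnm, hcm⟩ := Set.mem_iUnion.1 hm
    have hq : p ∈ qmap (ε n) (A n) (qdown ε A (n + 1) (m - (n + 1)) (nearestPts x (A m))) :=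
      mem_qmap.2 ⟨c, hcm, h1, h2⟩
    rw [← qdown_shift] at hq
    have e : (m - (n + 1)) + 1 = m - n := by omega
    rw [e] at hq
    exact Set.mem_iUnion.2 ⟨m, Set.mem_iUnion.2 ⟨by omega, hq⟩⟩
  · intro p hp
    obtain ⟨m, hm⟩ := Set.mem_iUnion.1 hp
    obtain ⟨hnm, hpm⟩ := Set.mem_iUnion.1 hm
    have hpm2 : p ∈ qdown ε A n (max m (n + 2) - n) (nearestPts x (A (max m (n + 2)))) :=
      Xstar_term_mono hAfin hApprox hγub hγ2 x hnm (le_max_left _ _) hpm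
    set M := max m (n + 2) with hM
    have hM2 : n + 2 ≤ M := le_max_right _ _
    have e : M - n = (M - (n + 1)) + 1 := by omega
    rw [e, qdown_shift] at hpm2
    refine qmap_mono ?_ hpm2
    intro q hq
    exact Set.mem_iUnion.2 ⟨M, Set.mem_iUnion.2 ⟨by omega, hq⟩⟩

end

section
variable {ε : ℕ → ℝ} {A : ℕ → Set X} {γ : ℕ → ℝ}


/-- a choice of point in each term of a thread. -/
noncomputable def seqc (c : FasoLimit ε A) (n : ℕ) : X := (c.1 n).2.2.1.some

lemma seqc_mem (c : FasoLimit ε A) (n : ℕ) : seqc c n ∈ (c.1 n).1 :=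
  (c.1 n).2.2.1.some_mem

lemma thread_diam (hAfin : ∀ n, (A n).Finite) (c : FasoLimit ε A) {n : ℕ} {p q : X}
    (hp : p ∈ (c.1 n).1) (hq : q ∈ (c.1 n).1) : dist p q < 4 * ε n :=
  lt_of_le_of_lt (Metric.dist_le_diam_of_mem
    ((hAfin n).subset (c.1 n).2.1).isBounded hp hq) (c.1 n).2.2.2

/-- each point of a thread term has a successor in the next term, `ε n`-close. -/
lemma thread_succ (c : FasoLimit ε A) {n : ℕ} {p : X} (hp : p ∈ (c.1 n).1) :
    ∃ q ∈ (c.1 (n + 1)).1, dist p q < ε n := by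
  have : p ∈ qmap (ε n) (A n) (c.1 (n + 1)).1 := (c.2 n).symm ▸ hp
  obtain ⟨q, hq, h1, -⟩ := mem_qmap.1 this
  exact ⟨q, hq, h1⟩

lemma seqc_cauchy (hεpos : ∀ n, 0 < ε n) (h2e : ∀ j, 2 * ε (j + 1) ≤ ε j)
    (hAfin : ∀ n, (A n).Finite) (c : FasoLimit ε A) : CauchySeq (seqc c) := by
  apply cauchySeq_of_le_geometric (1/2 : ℝ) (3 * ε 0) (by norm_num)
  intro n
  obtain ⟨q, hq, hd⟩ := thread_succ c (seqc_mem c n)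
  have h1 : dist q (seqc c (n + 1)) < 4 * ε (n + 1) := thread_diam hAfin c hq (seqc_mem c (n + 1))
  have h2 : 2 * ε (n + 1) ≤ ε n := h2e n
  have h3 : ε n ≤ ε 0 / 2 ^ n := by simpa using geps h2e 0 n
  calc dist (seqc c n) (seqc c (n + 1)) ≤ dist (seqc c n) q + dist q (seqc c (n + 1)) :=
        dist_triangle _ _ _
    _ ≤ 3 * ε n := by linarith
    _ ≤ 3 * ε 0 * (1/2) ^ n := by
        have e : 3 * ε 0 * (1/2 : ℝ) ^ n = 3 * (ε 0 / 2 ^ n) := by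
          rw [one_div, inv_pow]; ring
        rw [e]
        linarith
  
noncomputable def phihat' [Nonempty X] (c : FasoLimit ε A) : X := limUnder atTop (seqc c)

lemma seqc_tendsto [CompactSpace X] [Nonempty X] (hεpos : ∀ n, 0 < ε n)
    (h2e : ∀ j, 2 * ε (j + 1) ≤ ε j) (hAfin : ∀ n, (A n).Finite) (c : FasoLimit ε A) :
    Tendsto (seqc c) atTop (nhds (phihat' c)) :=
  (seqc_cauchy hεpos h2e hAfin c).tendsto_limUnder

/-- chain lemma: points of a thread term can be pushed `k` levels up. -/
lemma thread_chain (h2e : ∀ j, 2 * ε (j + 1) ≤ ε j) (c : FasoLimit ε A) {j : ℕ} {d : X}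
    (hd : d ∈ (c.1 j).1) :
    ∀ k, ∃ d' ∈ (c.1 (j + k)).1, dist d d' ≤ 2 * ε j - 2 * ε (j + k)
  | 0 => ⟨d, hd, by simp⟩
  | k + 1 => by
    obtain ⟨d', hd', hdd⟩ := thread_chain h2e c hd k
    obtain ⟨d'', hd'', h2⟩ := thread_succ c hd'
    have h3 : 2 * ε (j + k + 1) ≤ ε (j + k) := h2e (j + k)
    refine ⟨d'', by rw [show j + (k+1) = j + k + 1 by omega]; exact hd'', ?_⟩
    rw [show j + (k+1) = j + k + 1 by omega]
    calc dist d d'' ≤ dist d d' + dist d' d'' := dist_triangle _ _ _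
      _ ≤ 2 * ε j - 2 * ε (j + k + 1) := by linarith

/-- F1: every point of a thread term is `2 ε j`-close to the limit. -/
lemma thread_point_dist [CompactSpace X] [Nonempty X] (hεpos : ∀ n, 0 < ε n)
    (hεlim : Tendsto ε atTop (nhds 0)) (h2e : ∀ j, 2 * ε (j + 1) ≤ ε j)
    (hAfin : ∀ n, (A n).Finite) (c : FasoLimit ε A) {j : ℕ} {d : X}
    (hd : d ∈ (c.1 j).1) : dist d (phihat' c) ≤ 2 * ε j := by
  set x := phihat' c
  have key : ∀ k, dist d x ≤ 2 * ε j + 2 * ε (j + k) + dist (seqc c (j + k)) x := by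
    intro k
    obtain ⟨d', hd', hdd⟩ := thread_chain h2e c hd k
    have h1 : dist d' (seqc c (j + k)) < 4 * ε (j + k) :=
      thread_diam hAfin c hd' (seqc_mem c (j + k))
    calc dist d x ≤ dist d d' + dist d' (seqc c (j + k)) + dist (seqc c (j + k)) x :=
          dist_triangle4 _ _ _ _
      _ ≤ 2 * ε j + 2 * ε (j + k) + dist (seqc c (j + k)) x := by linarith
  have hten : Tendsto (fun k => 2 * ε j + 2 * ε (j + k) + dist (seqc c (j + k)) x)
      atTop (nhds (2 * ε j + 2 * 0 + 0)) := by
    have t1 : Tendsto (fun k => j + k) atTop atTop :=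
      tendsto_atTop_mono (fun k => Nat.le_add_left k j) tendsto_id
    have t2 : Tendsto (fun k => ε (j + k)) atTop (nhds 0) := hεlim.comp t1
    have t3 : Tendsto (fun k => seqc c (j + k)) atTop (nhds x) :=
      (seqc_tendsto hεpos h2e hAfin c).comp t1
    have t4 : Tendsto (fun k => dist (seqc c (j + k)) x) atTop (nhds (dist x x)) :=
      t3.dist tendsto_const_nhds
    rw [dist_self] at t4
    exact ((tendsto_const_nhds).add (t2.const_mul 2)).add t4
  simp only [mul_zero, add_zero] at hten
  exact ge_of_tendsto' hten key

/-- minimality: the nearest-point sets of the limit are contained in the thread. -/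
lemma thread_min [CompactSpace X] [Nonempty X] (hεpos : ∀ n, 0 < ε n)
    (hεlim : Tendsto ε atTop (nhds 0)) (h2e : ∀ j, 2 * ε (j + 1) ≤ ε j)
    (hAfin : ∀ n, (A n).Finite)
    (hγub : ∀ n y, infDist y (A n) ≤ γ n)
    (hrec : ∀ n, ε (n + 1) < (ε n - γ n) / 2)
    (c : FasoLimit ε A) (m : ℕ) :
    nearestPts (phihat' c) (A m) ⊆ (c.1 m).1 := by
  intro a ha
  set x := phihat' c
  obtain ⟨d, hd⟩ := (c.1 (m + 1)).2.2.1
  have h1 : dist d x ≤ 2 * ε (m + 1) := thread_point_dist hεpos hεlim h2e hAfin c hd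
  have h2 : dist x a ≤ γ m := ha.2 ▸ hγub m x
  have h3 : ε (m + 1) < (ε m - γ m) / 2 := hrec m
  have h4 : dist a d < ε m := by
    calc dist a d ≤ dist a x + dist x d := dist_triangle _ _ _
      _ = dist x a + dist d x := by rw [dist_comm a x, dist_comm x d]
      _ < ε m := by linarith
  rw [← c.2 m]
  exact mem_qmap.2 ⟨d, hd, h4, ha.1⟩

lemma thread_haus [CompactSpace X] [Nonempty X] (hεpos : ∀ n, 0 < ε n)
    (hεlim : Tendsto ε atTop (nhds 0)) (h2e : ∀ j, 2 * ε (j + 1) ≤ ε j)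
    (hAfin : ∀ n, (A n).Finite) (c : FasoLimit ε A) (n : ℕ) :
    Metric.hausdorffDist ((c.1 n).1) {phihat' c} ≤ 2 * ε n := by
  apply Metric.hausdorffDist_le_of_mem_dist (by have := hεpos n; linarith)
  · intro p hp
    exact ⟨phihat' c, Set.mem_singleton _, thread_point_dist hεpos hεlim h2e hAfin c hp⟩
  · intro y hy
    obtain ⟨d, hd⟩ := (c.1 n).2.2.1
    refine ⟨d, hd, ?_⟩
    rw [Set.eq_of_mem_singleton hy, dist_comm]
    exact thread_point_dist hεpos hεlim h2e hAfin c hd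

end
end Stmt18

namespace Stmt18
section
variable {X : Type*} [MetricSpace X] {ε : ℕ → ℝ} {A : ℕ → Set X} {γ : ℕ → ℝ}

lemma continuous_to_Ufin {Y : Type*} [TopologicalSpace Y] {δ : ℝ} {B : Set X}
    (g : Y → Ufin δ B) (h : ∀ y, ∀ᶠ y' in nhds y, (g y).1 ⊆ (g y').1) : Continuous g := by
  rw [continuous_def]
  intro S hS
  rw [isOpen_iff_mem_nhds]
  intro y hy
  filter_upwards [h y] with y' hy'
  exact hS (g y) hy (g y') hy'

lemma thread_qdown (c : FasoLimit ε A) (n : ℕ) :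
    ∀ k, qdown ε A n k ((c.1 (n + k)).1) = (c.1 n).1
  | 0 => rfl
  | k + 1 => by
    show qdown ε A n k (qmap (ε (n + k)) (A (n + k)) ((c.1 (n + k + 1)).1)) = _
    rw [c.2 (n + k)]
    exact thread_qdown c n k

lemma Xstar_stab
    (hAfin : ∀ n, (A n).Finite) (hApprox : ∀ n, ∀ y : X, ∃ a ∈ A n, dist y a < ε n)
    (hγub : ∀ n y, infDist y (A n) ≤ γ n)
    (hγ2 : ∀ n, γ n + γ (n + 1) < ε n) (x : X) (n : ℕ) :
    ∃ M, n < M ∧ Xstar ε A x n ⊆ qdown ε A n (M - n) (nearestPts x (A M)) := by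
  classical
  have hex : ∀ p ∈ Xstar ε A x n,
      ∃ m, n < m ∧ p ∈ qdown ε A n (m - n) (nearestPts x (A m)) := by
    intro p hp
    obtain ⟨m, hm⟩ := Set.mem_iUnion.1 hp
    obtain ⟨h1, h2⟩ := Set.mem_iUnion.1 hm
    exact ⟨m, h1, h2⟩
  choose! f hf1 hf2 using hex
  obtain ⟨b, hb, hmax⟩ := Set.exists_max_image (Xstar ε A x n) f
    ((hAfin n).subset (Xstar_subset_A x n)) (Xstar_nonempty hAfin hApprox x n)
  refine ⟨max (f b) (n + 1), by omega, fun p hp => ?_⟩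
  exact Xstar_term_mono hAfin hApprox hγub hγ2 x (hf1 p hp)
    (le_trans (hmax p hp) (le_max_left _ _)) (hf2 p hp)

end
end Stmt18

open unitInterval in
/-- `𝒳_*` is a strong deformation retract of `𝒳`: with `φ̂ : 𝒳 → X` the map sending a
thread to its Hausdorff limit point and `φ : X → 𝒳`, `x ↦ (X_*^n)`, the homotopy
`H(c,t) = c` for `t < 1` and `H(c,1) = φ(φ̂(c))` is continuous, goes from the identity
to the retraction `φ ∘ φ̂`, and fixes `𝒳_* = φ(X)` throughout. -/
theorem stmt_18 {X : Type*} [MetricSpace X] [CompactSpace X] [Nonempty X]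
    (ε : ℕ → ℝ) (A : ℕ → Set X) (γ : ℕ → ℝ)
    (hεpos : ∀ n, 0 < ε n)
    (hεlim : Filter.Tendsto ε Filter.atTop (nhds 0))
    (hAfin : ∀ n, (A n).Finite)
    (hApprox : ∀ n, ∀ x : X, ∃ a ∈ A n, dist x a < ε n)
    (hγ : ∀ n, IsLUB (Set.range fun x : X => Metric.infDist x (A n)) (γ n))
    (hrec : ∀ n, ε (n + 1) < (ε n - γ n) / 2)
    :
    ∃ (φ : X → FasoLimit ε A) (φhat : FasoLimit ε A → X),
      (∀ (x : X) (n : ℕ), ((φ x).1 n).1 = Xstar ε A x n) ∧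
      (∀ t : FasoLimit ε A,
        Filter.Tendsto (fun n => Metric.hausdorffDist ((t.1 n).1) {φhat t})
          Filter.atTop (nhds 0)) ∧
      (∀ x : X, φhat (φ x) = x) ∧
      Continuous (fun p : FasoLimit ε A × I =>
        if p.2 = 1 then φ (φhat p.1) else p.1) ∧
      (∀ c : FasoLimit ε A, (if (0 : I) = 1 then φ (φhat c) else c) = c) ∧
      (∀ c : FasoLimit ε A, (if (1 : I) = 1 then φ (φhat c) else c) = φ (φhat c)) ∧
      (∀ (x : X) (t : I), (if t = 1 then φ (φhat (φ x)) else φ x) = φ x) := by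
  classical
  open Stmt18 in
  have hγub : ∀ n y, infDist y (A n) ≤ γ n := fun n y => (hγ n).1 ⟨y, rfl⟩
  have hγ0 : ∀ n, 0 ≤ γ n :=
    fun n => le_trans Metric.infDist_nonneg (hγub n (Classical.arbitrary X))
  have hγlt : ∀ n, γ n < ε n := by
    intro n
    have hcomp : IsCompact (Set.range fun y : X => infDist y (A n)) := by
      rw [← Set.image_univ]
      exact isCompact_univ.image (continuous_infDist_pt _)
    have hne : (Set.range fun y : X => infDist y (A n)).Nonempty := Set.range_nonempty _
    have hmem : γ n ∈ Set.range fun y : X => infDist y (A n) := by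
      rw [(hγ n).unique (hcomp.isLUB_sSup hne)]
      exact hcomp.sSup_mem hne
    obtain ⟨x₀, hx₀⟩ := hmem
    obtain ⟨a, ha, hd⟩ := hApprox n x₀
    calc γ n = infDist x₀ (A n) := hx₀.symm
      _ ≤ dist x₀ a := Metric.infDist_le_dist_of_mem ha
      _ < ε n := hd
  have h2e : ∀ j, 2 * ε (j + 1) ≤ ε j := fun j => by
    have := hrec j; have := hγ0 j; linarith
  have hγ2 : ∀ n, γ n + γ (n + 1) < ε n := fun n => by
    have := hrec n; have := hγlt (n + 1); have := hεpos (n + 1); linarith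
  have h01 : (0 : I) ≠ 1 := fun h => by simpa using congrArg Subtype.val h
  -- the retraction map φ
  set φf : X → FasoLimit ε A := fun x =>
    ⟨fun n => ⟨Xstar ε A x n, Xstar_subset_A x n, Xstar_nonempty hAfin hApprox x n,
      Xstar_diam hεpos h2e hAfin hApprox hγub hγlt x n⟩,
     fun n => Xstar_thread hAfin hApprox hγub hγ2 x n⟩ with hφf
  have hretr : ∀ x, phihat' (φf x) = x := by
    intro x
    refine tendsto_nhds_unique (seqc_tendsto hεpos h2e hAfin (φf x)) ?_
    rw [tendsto_iff_dist_tendsto_zero]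
    apply squeeze_zero (fun n => dist_nonneg)
      (fun n => (Xstar_point_dist hεpos h2e hγub hγlt (seqc_mem (φf x) n)).le)
    simpa using hεlim.const_mul (2 : ℝ)
  refine ⟨φf, phihat', fun _ _ => rfl, ?_, hretr, ?_,
    fun c => if_neg h01, fun c => if_pos rfl, fun x t => ?_⟩
  · -- Hausdorff convergence
    intro t
    apply squeeze_zero (fun n => Metric.hausdorffDist_nonneg)
      (fun n => thread_haus hεpos hεlim h2e hAfin t n)
    simpa using hεlim.const_mul (2 : ℝ)
  · -- continuity of the homotopy
    have hcomp : ∀ n, Continuous fun p : FasoLimit ε A × I =>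
        (if p.2 = 1 then φf (phihat' p.1) else p.1).1 n := by
      intro n
      apply continuous_to_Ufin
      rintro ⟨c, t⟩
      by_cases ht : t = 1
      · subst ht
        set x := phihat' c with hx
        obtain ⟨M, hnM, hstab⟩ := Xstar_stab hAfin hApprox hγub hγ2 x n
        have h4pos : (0 : ℝ) < ε (M + 1) / 4 := by have := hεpos (M + 1); linarith
        obtain ⟨m', hm'1, hm'2⟩ :=
          ((hεlim.eventually (gt_mem_nhds h4pos)).and (eventually_ge_atTop (M + 1))).exists
        have hV : IsOpen {c' : FasoLimit ε A | (c.1 m').1 ⊆ (c'.1 m').1} := by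
          have hU : IsOpen {D : Ufin (4 * ε m') (A m') | (c.1 m').1 ⊆ D.1} :=
            fun E hE D hED => hE.trans hED
          have hproj : Continuous fun c' : FasoLimit ε A => c'.1 m' :=
            (continuous_apply m').comp continuous_subtype_val
          exact hU.preimage hproj
        have hmem : ((c, (1 : I)) : FasoLimit ε A × I) ∈
            {c' : FasoLimit ε A | (c.1 m').1 ⊆ (c'.1 m').1} ×ˢ (Set.univ : Set I) := by
          refine ⟨?_, Set.mem_univ _⟩; exact fun _ h => h
        filter_upwards [(hV.prod isOpen_univ).mem_nhds hmem] with q hq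
        obtain ⟨c', t'⟩ := q
        have hq1 : (c.1 m').1 ⊆ (c'.1 m').1 := hq.1
        rw [if_pos rfl]
        by_cases ht' : t' = 1
        · rw [if_pos ht']
          show Xstar ε A x n ⊆ Xstar ε A (phihat' c') n
          set x' := phihat' c' with hx'
          obtain ⟨p0, hp0⟩ := (c.1 m').2.2.1
          have hxx' : dist x x' ≤ 4 * ε m' := by
            have h1 : dist p0 x ≤ 2 * ε m' := thread_point_dist hεpos hεlim h2e hAfin c hp0
            have h2 : dist p0 x' ≤ 2 * ε m' :=
              thread_point_dist hεpos hεlim h2e hAfin c' (hq1 hp0)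
            calc dist x x' ≤ dist x p0 + dist p0 x' := dist_triangle _ _ _
              _ ≤ 4 * ε m' := by rw [dist_comm x p0]; linarith
          have hkey : dist x x' + γ M + γ (M + 1) < ε M := by
            have hγM1 := hγlt (M + 1)
            have hrM := hrec M
            linarith
          exact fun p hp => qdown_nearest_subset_Xstar hnM
            (nearest_step hAfin hApprox hγub hkey) (hstab hp)
        · rw [if_neg ht']
          show Xstar ε A x n ⊆ (c'.1 n).1
          intro p hp
          have h2 : nearestPts x (A M) ⊆ (c.1 M).1 :=
            thread_min hεpos hεlim h2e hAfin hγub hrec c M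
          have hcas : (c.1 M).1 ⊆ (c'.1 M).1 := by
            have e : M + (m' - M) = m' := by omega
            have h1 := thread_qdown c M (m' - M)
            have h1' := thread_qdown c' M (m' - M)
            rw [e] at h1 h1'
            rw [← h1, ← h1']
            exact qdown_mono _ hq1
          have h3 : p ∈ qdown ε A n (M - n) ((c'.1 M).1) :=
            qdown_mono _ (h2.trans hcas) (hstab hp)
          have h4 := thread_qdown c' n (M - n)
          rw [show n + (M - n) = M by omega] at h4
          rwa [h4] at h3
      · have hV : IsOpen {c' : FasoLimit ε A | (c.1 n).1 ⊆ (c'.1 n).1} := by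
          have hU : IsOpen {D : Ufin (4 * ε n) (A n) | (c.1 n).1 ⊆ D.1} :=
            fun E hE D hED => hE.trans hED
          have hproj : Continuous fun c' : FasoLimit ε A => c'.1 n :=
            (continuous_apply n).comp continuous_subtype_val
          exact hU.preimage hproj
        have hmem : ((c, t) : FasoLimit ε A × I) ∈
            {c' : FasoLimit ε A | (c.1 n).1 ⊆ (c'.1 n).1} ×ˢ {t' : I | t' ≠ 1} := by
          refine ⟨?_, ht⟩; exact fun _ h => h
        filter_upwards [(hV.prod isOpen_ne).mem_nhds hmem] with q hq
        obtain ⟨c', t'⟩ := q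
        rw [if_neg ht, if_neg hq.2]
        exact hq.1
    exact (continuous_pi hcomp).subtype_mk _
  · -- fixes φ(X)
    split_ifs with h
    · rw [hretr]
    · rfl
end
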